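/- Let n = 2p with p > 2 prime. If f : 𝔽₂ⁿ → 𝔽₂ is a rotation symmetric bent function, then f(0,…,0) ≠ f(1,…,1), i.e., (-1)^{f(v₀)} = -(-1)^{f(v_{2ⁿ-1})}. -/

import Mathlib

/-!
Rotation by two positions has order `p` on `𝔽₂^(2p)`, so a rotation-invariant sum over
`𝔽₂^(2p)` is congruent mod `p` to its restriction to the four fixed points `0`, `1`, `0101…`
and `1010…`, the last two lying in one rotation orbit. For the Walsh coefficients at `w = 0`
and `w = 1` this gives, with `A = (-1)^f(0)`, `B = (-1)^f(1)`, `C = (-1)^f(0101…)` and since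
`0101…` has odd weight `p`, `W(0) ≡ A + B + 2C` and `W(1) ≡ A + B - 2C (mod p)`.
If `f(0) = f(1)` then `W(0) W(1) ≡ 4A² - 4C² = 0`, whereas `W(w) = ±2^p` is a unit mod `p`.
-/

open Finset

theorem card_filter_modEq_card_filter_fixed {X : Type*} [Fintype X] [DecidableEq X]
    {p : ℕ} [Fact p.Prime] {T : X → X} (hT : T^[p] = id) (P : X → Prop) [DecidablePred P]
    (hP : ∀ x, P x → P (T x)) :
    #{x | P x} ≡ #{x | P x ∧ T x = x} [MOD p] := by
  let F : Function.End {x // P x} := fun y => ⟨T y, hP _ y.2⟩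
  have hF : F ^ p ^ 1 = 1 := by
    have hsemi : Function.Semiconj Subtype.val F T := fun _ => rfl
    rw [pow_one]
    funext y
    exact Subtype.ext ((hsemi.iterate_right p y).trans (congrFun hT y))
  have hfix : Fintype.card F.fixedPoints = #{x | P x ∧ T x = x} := by
    rw [← Fintype.card_subtype]
    exact Fintype.card_congr ((Equiv.subtypeEquivRight fun y => Subtype.ext_iff).trans
      (Equiv.subtypeSubtypeEquivSubtypeInter P (fun x => T x = x)))
  rw [← hfix, ← Fintype.card_subtype]
  exact Equiv.Perm.card_fixedPoints_modEq hF

theorem sum_eq_sum_filter_fixed {X R : Type*} [Fintype X] [DecidableEq X]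
    [NonAssocSemiring R] {p : ℕ} [Fact p.Prime] [CharP R p] {T : X → X} (hT : T^[p] = id)
    (g : X → R) (hg : ∀ x, g (T x) = g x) :
    ∑ x, g x = ∑ x with T x = x, g x := by
  classical
  have hmaps (s : Finset X) : ∀ x ∈ s, g x ∈ univ.image g :=
    fun x _ => mem_image_of_mem g (mem_univ x)
  rw [← sum_fiberwise_of_maps_to (hmaps _), ← sum_fiberwise_of_maps_to (hmaps _)]
  refine sum_congr rfl fun b _ => ?_
  have hfiber (s : Finset X) : ∑ x ∈ s with g x = b, g x = #{x ∈ s | g x = b} • b :=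
    sum_eq_card_nsmul fun x hx => (mem_filter.1 hx).2
  have hcard :=
    card_filter_modEq_card_filter_fixed hT (fun x => g x = b) fun x hx => (hg x).trans hx
  rw [hfiber, hfiber, filter_filter, nsmul_eq_mul, nsmul_eq_mul]
  congr 1
  simpa only [← CharP.cast_eq_mod, and_comm] using congrArg (Nat.cast : ℕ → R) hcard

section CyclicShift

open Fin.NatCast

variable {n : ℕ} {α : Type*}

def cyclicShift (k : Fin n) (x : Fin n → α) : Fin n → α := fun t => x (t + k)

theorem iterate_cyclicShift_one [NeZero n] (m : ℕ) (x : Fin n → α) :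
    (cyclicShift 1)^[m] x = cyclicShift (m : Fin n) x := by
  induction m with
  | zero => funext t; simp [cyclicShift]
  | succ m ih =>
    funext t
    rw [Function.iterate_succ_apply', ih]
    show x (t + 1 + (m : Fin n)) = x (t + ((m + 1 : ℕ) : Fin n))
    rw [Nat.cast_succ, add_assoc, add_comm (1 : Fin n)]

theorem iterate_cyclicShift_one_self [NeZero n] :
    (cyclicShift (1 : Fin n) (α := α))^[n] = id := by
  funext x t
  simp [iterate_cyclicShift_one, cyclicShift]

theorem sum_cyclicShift [AddCommMonoid α] [NeZero n] (k : Fin n) (x : Fin n → α) :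
    ∑ t, cyclicShift k x t = ∑ t, x t :=
  Equiv.sum_comp (Equiv.addRight k) x

theorem natCast_val_add_of_dvd [NeZero n] {d : ℕ} (hd : d ∣ n) (s t : Fin n) :
    (((s + t).val : ℕ) : ZMod d) = s.val + t.val := by
  rw [Fin.val_add, ← Nat.cast_add, ZMod.natCast_eq_natCast_iff]
  exact (Nat.mod_modEq _ n).of_dvd hd

theorem natCast_val_one_of_dvd [NeZero n] {d : ℕ} (hd : d ∣ n) :
    (((1 : Fin n).val : ℕ) : ZMod d) = 1 := by
  rw [Fin.val_one']
  exact ((ZMod.natCast_eq_natCast_iff _ 1 d).2 ((Nat.mod_modEq 1 n).of_dvd hd)).trans Nat.cast_one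

def alternating (a b : α) : Fin n → α := fun t => if (t.val : ZMod 2) = 0 then a else b

theorem apply_eq_apply_natCast_val_mod_two [NeZero n] {x : Fin n → α}
    (hx : (cyclicShift 1)^[2] x = x) (t : Fin n) : x t = x ((t.val % 2 : ℕ) : Fin n) := by
  have hinv : cyclicShift ((2 * (t.val / 2) : ℕ) : Fin n) x = x := by
    rw [← iterate_cyclicShift_one, Function.iterate_mul, Function.iterate_fixed hx]
  calc x t = x ((t.val % 2 + 2 * (t.val / 2) : ℕ) : Fin n) := by
        rw [Nat.mod_add_div, Fin.cast_val_eq_self]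
    _ = cyclicShift ((2 * (t.val / 2) : ℕ) : Fin n) x ((t.val % 2 : ℕ) : Fin n) := by
        rw [Nat.cast_add]; rfl
    _ = _ := by rw [hinv]

theorem cyclicShift_one_alternating [NeZero n] (hn : Even n) (a b : α) :
    cyclicShift 1 (alternating a b) = (alternating b a : Fin n → α) := by
  have hd := even_iff_two_dvd.1 hn
  have hswap : ∀ c : ZMod 2, (c + 1 = 0 ↔ ¬c = 0) := by decide
  funext t
  simp only [cyclicShift, alternating, natCast_val_add_of_dvd hd, natCast_val_one_of_dvd hd,
    hswap, ite_not]

theorem alternating_zero [NeZero n] (a b : α) : alternating a b (0 : Fin n) = a := by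
  simp [alternating]

theorem alternating_one [NeZero n] (hn : 1 < n) (a b : α) : alternating a b (1 : Fin n) = b := by
  simp [alternating, Nat.mod_eq_of_lt hn]

theorem eq_alternating_of_iterate_cyclicShift [NeZero n] {x : Fin n → α}
    (hx : (cyclicShift 1)^[2] x = x) : x = alternating (x 0) (x 1) := by
  funext t
  rw [apply_eq_apply_natCast_val_mod_two hx t, alternating, ← ZMod.natCast_mod t.val 2]
  rcases Nat.mod_two_eq_zero_or_one t.val with h | h <;> simp [h]

theorem filter_iterate_cyclicShift_eq_image [Fintype α] [DecidableEq α] [NeZero n]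
    (hn : Even n) :
    ({x | (cyclicShift 1)^[2] x = x} : Finset (Fin n → α)) =
      univ.image fun ab : α × α => alternating ab.1 ab.2 := by
  ext x
  simp only [mem_filter, mem_univ, true_and, mem_image, Prod.exists]
  constructor
  · exact fun hx => ⟨x 0, x 1, (eq_alternating_of_iterate_cyclicShift hx).symm⟩
  · rintro ⟨a, b, rfl⟩
    simp only [Function.iterate_succ_apply, Function.iterate_zero_apply,
      cyclicShift_one_alternating hn]

theorem sum_filter_iterate_cyclicShift [Fintype α] [DecidableEq α] {M : Type*}
    [AddCommMonoid M] [NeZero n] (hn : Even n) (g : (Fin n → α) → M) :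
    ∑ x with (cyclicShift 1)^[2] x = x, g x = ∑ ab : α × α, g (alternating ab.1 ab.2) := by
  have h1n : 1 < n := by
    obtain ⟨k, hk⟩ := hn
    have := NeZero.ne n
    omega
  rw [filter_iterate_cyclicShift_eq_image hn, sum_image]
  intro ab _ cd _ h
  have hfst := congrFun h 0
  have hsnd := congrFun h 1
  simp only [alternating_zero, alternating_one h1n] at hfst hsnd
  exact Prod.ext hfst hsnd

end CyclicShift

theorem sum_range_natCast_zmod_two (m : ℕ) : ∑ i ∈ range (2 * m), (i : ZMod 2) = m := by
  induction m with
  | zero => simp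
  | succ m ih =>
    rw [Nat.mul_succ, sum_range_succ, sum_range_succ, ih]
    push_cast
    reduce_mod_char

theorem sum_alternating_zero_one (m : ℕ) [NeZero (2 * m)] :
    ∑ t : Fin (2 * m), alternating (0 : ZMod 2) 1 t = m := by
  have hval : ∀ c : ZMod 2, (if c = 0 then 0 else 1) = c := by decide
  simp only [alternating, hval]
  rw [← Nat.cast_sum, Fin.sum_univ_eq_sum_range (fun i => i), Nat.cast_sum,
    sum_range_natCast_zmod_two]

theorem neg_one_pow_val_add_one {R : Type*} [Ring R] (c : ZMod 2) :
    (-1 : R) ^ (c + 1).val = -(-1) ^ c.val := by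
  rw [neg_one_pow_congr (n := c.val + 1) (by revert c; decide), pow_succ, mul_neg_one]

section RotationInvariantSum

variable {p : ℕ} [Fact p.Prime] {R : Type*} [NonAssocSemiring R] [CharP R p]

theorem sum_eq_sum_alternating_of_iterate_invariant {α : Type*} [Fintype α] [DecidableEq α]
    (g : (Fin (2 * p) → α) → R) (hg : ∀ x, g ((cyclicShift 1)^[2] x) = g x) :
    ∑ x, g x = ∑ ab : α × α, g (alternating ab.1 ab.2) := by
  have hT : ((cyclicShift (1 : Fin (2 * p)) (α := α))^[2])^[p] = id := by
    rw [← Function.iterate_mul, iterate_cyclicShift_one_self]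
  rw [sum_eq_sum_filter_fixed hT g hg, sum_filter_iterate_cyclicShift (even_two_mul p)]

theorem sum_eq_of_cyclicShift_invariant (g : (Fin (2 * p) → ZMod 2) → R)
    (hg : ∀ x, g (cyclicShift 1 x) = g x) :
    ∑ x, g x = g (fun _ => 0) + g (fun _ => 1) + 2 * g (alternating 0 1) := by
  have hg2 (x) : g ((cyclicShift 1)^[2] x) = g x :=
    congrFun (Function.iterate_invariant (funext hg) 2) x
  have hconst (a : ZMod 2) : (alternating a a : Fin (2 * p) → ZMod 2) = fun _ => a :=
    funext fun _ => ite_self a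
  have hswap : g (alternating 1 0) = g (alternating 0 1) := by
    rw [← cyclicShift_one_alternating (even_two_mul p), hg]
  have huniv : (univ : Finset (ZMod 2)) = {0, 1} := by decide
  rw [sum_eq_sum_alternating_of_iterate_invariant g hg2, Fintype.sum_prod_type, huniv]
  simp only [sum_pair zero_ne_one, hconst, hswap]
  rw [two_mul (g _)]
  abel

end RotationInvariantSum

theorem ZMod.intCast_ne_zero_of_eq_two_pow_or_eq_neg {p : ℕ} [Fact p.Prime] (hp : p ≠ 2)
    {S : ℤ} {k : ℕ} (hS : S = 2 ^ k ∨ S = -(2 ^ k)) : (S : ZMod p) ≠ 0 := by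
  have h2 : (2 : ZMod p) ≠ 0 := by
    intro h
    have := (ZMod.natCast_eq_zero_iff 2 p).1 (by exact_mod_cast h)
    exact hp ((Nat.prime_dvd_prime_iff_eq Fact.out Nat.prime_two).1 this)
  rcases hS with rfl | rfl <;> push_cast <;> simp [h2]

theorem stmt15 (p : ℕ) (hp : p.Prime) (hp2 : 2 < p)
    (f : (Fin (2*p) → ZMod 2) → ZMod 2)
    (hrot : ∀ x : Fin (2*p) → ZMod 2, f (fun t => x (t + ⟨1, by omega⟩)) = f x)
    (hbent : ∀ w : Fin (2*p) → ZMod 2,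
      (∑ x : Fin (2*p) → ZMod 2, (-1 : ℤ) ^ ((f x + ∑ i, w i * x i).val)) = 2 ^ p ∨
      (∑ x : Fin (2*p) → ZMod 2, (-1 : ℤ) ^ ((f x + ∑ i, w i * x i).val)) = -(2 ^ p)) :
    f (fun _ => 0) ≠ f (fun _ => 1) := by
  have : Fact p.Prime := ⟨hp⟩
  have hone : (⟨1, by omega⟩ : Fin (2 * p)) = 1 := by
    ext; rw [Fin.val_one', Nat.mod_eq_of_lt (by omega)]
  have hf : ∀ x, f (cyclicShift 1 x) = f x := hone ▸ hrot
  let G (c : ZMod 2) (x : Fin (2 * p) → ZMod 2) : ZMod p := (-1) ^ (f x + ∑ i, c * x i).val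
  have hG (c : ZMod 2) (x : Fin (2 * p) → ZMod 2) : G c (cyclicShift 1 x) = G c x := by
    simp only [G, hf, ← mul_sum, sum_cyclicShift]
  have hne (c : ZMod 2) :
      G c (fun _ => 0) + G c (fun _ => 1) + 2 * G c (alternating 0 1) ≠ 0 := by
    rw [← sum_eq_of_cyclicShift_invariant (G c) (hG c)]
    push_cast [G]
    exact_mod_cast ZMod.intCast_ne_zero_of_eq_two_pow_or_eq_neg hp2.ne' (hbent fun _ => c)
  have hones : ∑ _i : Fin (2 * p), (1 : ZMod 2) = 0 := by
    simp [show (2 : ZMod 2) = 0 from rfl]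
  have hodd : ∑ t : Fin (2 * p), alternating (0 : ZMod 2) 1 t = 1 :=
    (sum_alternating_zero_one p).trans (ZMod.natCast_eq_one_iff_odd.2 (hp.odd_of_ne_two hp2.ne'))
  have hW0 := hne 0
  have hW1 := hne 1
  simp only [G, zero_mul, sum_const_zero, add_zero, one_mul, hones, hodd,
    neg_one_pow_val_add_one] at hW0 hW1
  intro h
  rw [← h] at hW0 hW1
  have hsq (k : ℕ) : ((-1 : ZMod p) ^ k) ^ 2 = 1 := by
    rw [← pow_mul, mul_comm, pow_mul, neg_one_sq, one_pow]
  exact mul_ne_zero hW0 hW1 <| by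
    linear_combination 4 * hsq (f fun _ => 0).val - 4 * hsq (f (alternating 0 1)).val
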